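/- Let A be a 3×3 real symmetric positive definite matrix. If the condition number κ(A) is at most 2 + √3, then the Kantorovich function K(x) = (xᵀAx)(xᵀA⁻¹x) is convex on ℝ³. -/

import Mathlib

/-!
Along a line `x + t • v` the Kantorovich function is a product of two quadratic polynomials in
`t`, whose second derivative is `2 * quadFormMulHessian A A⁻¹ (x + t • v) v`; so it suffices that
this form be nonnegative. Diagonalising `A = U diag(λ) Uᵀ` (then `A⁻¹ = U diag(λ⁻¹) Uᵀ`) turns it,
with `aᵢ = zᵢ vᵢ` in eigencoordinates, into `6 ∑ aᵢ² + ∑_{i<j} (λᵢ/λⱼ + λⱼ/λᵢ) Bᵢⱼ` where `Bᵢⱼ ≥ 2 aᵢ aⱼ`.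
The bound `κ ≤ 2 + √3` is exactly `λᵢ/λⱼ + λⱼ/λᵢ ≤ 4`, so each pair term is at least
`min 0 (8 aᵢ aⱼ)`. In dimension three the products `aᵢ aⱼ` cannot all be negative, and what is
left is a positive definite quadratic form in the `|aᵢ|`.
-/

open Matrix Set

theorem convexOn_univ_of_forall_convexOn_line {E β : Type*} [AddCommGroup E] [Module ℝ E]
    [AddCommMonoid β] [PartialOrder β] [Module ℝ β] {f : E → β}
    (h : ∀ x v : E, ConvexOn ℝ univ fun t : ℝ => f (x + t • v)) : ConvexOn ℝ univ f := by
  refine ⟨convex_univ, fun x _ y _ a b ha hb hab => ?_⟩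
  have hline : y + a • (x - y) = a • x + b • y := by
    rw [eq_sub_of_add_eq' hab]; module
  simpa [hline] using (h y (x - y)).2 (mem_univ 1) (mem_univ 0) ha hb hab

theorem hasDerivAt_quadratic (a b c t : ℝ) :
    HasDerivAt (fun t => a + 2 * b * t + c * t ^ 2) (2 * (b + c * t)) t := by
  refine ((((hasDerivAt_id t).const_mul (2 * b)).const_add a).add
    ((hasDerivAt_pow 2 t).const_mul c)).congr_deriv ?_
  norm_num
  ring

theorem convexOn_univ_quadratic_mul_quadratic {a b c a' b' c' : ℝ}
    (h : ∀ t, 0 ≤ c * (a' + 2 * b' * t + c' * t ^ 2) + c' * (a + 2 * b * t + c * t ^ 2)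
      + 4 * ((b + c * t) * (b' + c' * t))) :
    ConvexOn ℝ univ fun t => (a + 2 * b * t + c * t ^ 2) * (a' + 2 * b' * t + c' * t ^ 2) := by
  set P := fun t => a + 2 * b * t + c * t ^ 2
  set Q := fun t => a' + 2 * b' * t + c' * t ^ 2
  have hP := hasDerivAt_quadratic a b c
  have hQ := hasDerivAt_quadratic a' b' c'
  have hP' (t : ℝ) : HasDerivAt (fun t => 2 * (b + c * t)) (2 * c) t := by
    simpa using (((hasDerivAt_id t).const_mul c).const_add b).const_mul 2
  have hQ' (t : ℝ) : HasDerivAt (fun t => 2 * (b' + c' * t)) (2 * c') t := by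
    simpa using (((hasDerivAt_id t).const_mul c').const_add b').const_mul 2
  have hderiv : deriv (fun t => P t * Q t) =
      fun t => 2 * (b + c * t) * Q t + P t * (2 * (b' + c' * t)) :=
    funext fun t => ((hP t).mul (hQ t)).deriv
  have hderiv2 (t : ℝ) : HasDerivAt (deriv fun t => P t * Q t)
      (2 * c * Q t + 2 * (b + c * t) * (2 * (b' + c' * t))
        + (2 * (b + c * t) * (2 * (b' + c' * t)) + P t * (2 * c'))) t := by
    rw [hderiv]; exact ((hP' t).mul (hQ t)).add ((hP t).mul (hQ' t))
  refine convexOn_univ_of_deriv2_nonneg (fun t => ((hP t).mul (hQ t)).differentiableAt)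
    (fun t => (hderiv2 t).differentiableAt) fun t => ?_
  rw [Function.iterate_succ_apply, Function.iterate_one, (hderiv2 t).deriv]
  linarith [h t]

namespace Matrix

section QuadForm

variable {n R : Type*} [Fintype n]

theorem IsSymm.dotProduct_mulVec_comm [CommSemiring R] {M : Matrix n n R} (hM : M.IsSymm)
    (x y : n → R) : x ⬝ᵥ M *ᵥ y = y ⬝ᵥ M *ᵥ x := by
  rw [← dotProduct_transpose_mulVec, hM.eq]

theorem dotProduct_mulVec_add_smul [CommRing R] (M : Matrix n n R) (x v : n → R) (t : R) :
    v ⬝ᵥ M *ᵥ (x + t • v) = v ⬝ᵥ M *ᵥ x + (v ⬝ᵥ M *ᵥ v) * t := by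
  simp only [mulVec_add, mulVec_smul, dotProduct_add, dotProduct_smul, smul_eq_mul]
  ring

theorem IsSymm.add_smul_dotProduct_mulVec_add_smul [CommRing R] {M : Matrix n n R}
    (hM : M.IsSymm) (x v : n → R) (t : R) :
    (x + t • v) ⬝ᵥ M *ᵥ (x + t • v)
      = x ⬝ᵥ M *ᵥ x + 2 * (v ⬝ᵥ M *ᵥ x) * t + (v ⬝ᵥ M *ᵥ v) * t ^ 2 := by
  simp only [mulVec_add, mulVec_smul, dotProduct_add, add_dotProduct, dotProduct_smul,
    smul_dotProduct, smul_eq_mul, hM.dotProduct_mulVec_comm x v]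
  ring

/-- Half the Hessian of `x ↦ (xᵀMx)(xᵀNx)` at `z`, evaluated on `v`. -/
def quadFormMulHessian [CommRing R] (M N : Matrix n n R) (z v : n → R) : R :=
  (v ⬝ᵥ M *ᵥ v) * (z ⬝ᵥ N *ᵥ z) + (v ⬝ᵥ N *ᵥ v) * (z ⬝ᵥ M *ᵥ z)
    + 4 * ((v ⬝ᵥ M *ᵥ z) * (v ⬝ᵥ N *ᵥ z))

theorem convexOn_quadForm_mul {M N : Matrix n n ℝ} (hM : M.IsSymm) (hN : N.IsSymm)
    (h : ∀ z v, 0 ≤ quadFormMulHessian M N z v) :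
    ConvexOn ℝ univ fun x => (x ⬝ᵥ M *ᵥ x) * (x ⬝ᵥ N *ᵥ x) := by
  refine convexOn_univ_of_forall_convexOn_line fun x v => ?_
  simp only [hM.add_smul_dotProduct_mulVec_add_smul, hN.add_smul_dotProduct_mulVec_add_smul]
  refine convexOn_univ_quadratic_mul_quadratic fun t => ?_
  have hzv := h (x + t • v) v
  rw [quadFormMulHessian, hM.add_smul_dotProduct_mulVec_add_smul,
    hN.add_smul_dotProduct_mulVec_add_smul, dotProduct_mulVec_add_smul,
    dotProduct_mulVec_add_smul] at hzv
  linarith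

theorem quadFormMulHessian_conj [CommRing R] (U M N : Matrix n n R) (z v : n → R) :
    quadFormMulHessian (U * M * Uᵀ) (U * N * Uᵀ) z v
      = quadFormMulHessian M N (Uᵀ *ᵥ z) (Uᵀ *ᵥ v) := by
  have hconj (M : Matrix n n R) (x y : n → R) :
      x ⬝ᵥ (U * M * Uᵀ) *ᵥ y = (Uᵀ *ᵥ x) ⬝ᵥ M *ᵥ (Uᵀ *ᵥ y) := by
    rw [← mulVec_mulVec, ← mulVec_mulVec, dotProduct_mulVec, mulVec_transpose, mulVec_transpose]
  simp only [quadFormMulHessian, hconj]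

end QuadForm

section Spectral

variable {n : Type*} [Fintype n] [DecidableEq n]

theorem inv_mul_diagonal_mul_transpose {R : Type*} [Field R] {U : Matrix n n R}
    (hU : Uᵀ * U = 1) {d : n → R} (hd : ∀ i, d i ≠ 0) :
    (U * diagonal d * Uᵀ)⁻¹ = U * diagonal d⁻¹ * Uᵀ := by
  have hD : diagonal d * diagonal d⁻¹ = 1 := by
    rw [diagonal_mul_diagonal, ← diagonal_one]
    exact congrArg diagonal (funext fun i => mul_inv_cancel₀ (hd i))
  refine inv_eq_right_inv ?_
  calc U * diagonal d * Uᵀ * (U * diagonal d⁻¹ * Uᵀ)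
      = U * (diagonal d * (Uᵀ * U) * diagonal d⁻¹) * Uᵀ := by simp only [Matrix.mul_assoc]
    _ = 1 := by rw [hU, Matrix.mul_one, hD, Matrix.mul_one, mul_eq_one_comm.mp hU]

variable {A : Matrix n n ℝ}

theorem IsHermitian.eq_eigenvectorUnitary_mul_diagonal_mul_transpose (hA : A.IsHermitian) :
    A = (hA.eigenvectorUnitary : Matrix n n ℝ) * diagonal hA.eigenvalues
      * (hA.eigenvectorUnitary : Matrix n n ℝ)ᵀ := by
  conv_lhs => rw [hA.spectral_theorem]
  simp [Unitary.conjStarAlgAut_apply, star_eq_conjTranspose]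

theorem IsHermitian.transpose_eigenvectorUnitary_mul_self (hA : A.IsHermitian) :
    (hA.eigenvectorUnitary : Matrix n n ℝ)ᵀ * hA.eigenvectorUnitary = 1 := by
  simpa [star_eq_conjTranspose] using Unitary.coe_star_mul_self hA.eigenvectorUnitary

end Spectral

end Matrix

theorem le_mul_of_iSup_div_iInf_le {ι : Type*} [Finite ι] {f : ι → ℝ} (hf : ∀ i, 0 < f i)
    {c : ℝ} (h : (⨆ i, f i) / (⨅ i, f i) ≤ c) (i j : ι) : f i ≤ c * f j := by
  have : Nonempty ι := ⟨i⟩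
  obtain ⟨k, hk⟩ := exists_eq_ciInf_of_finite (f := f)
  have hinf : 0 < ⨅ i, f i := hk ▸ hf k
  have hsup : f i ≤ ⨆ i, f i := le_ciSup (Finite.bddAbove_range f) i
  rw [div_le_iff₀ hinf] at h
  have hc : 0 ≤ c := by nlinarith [hf i]
  calc f i ≤ c * ⨅ i, f i := hsup.trans h
    _ ≤ c * f j := mul_le_mul_of_nonneg_left (ciInf_le (Finite.bddBelow_range f) j) hc

/-- `t + 1/t ≤ 4` exactly for `t ∈ [2 - √3, 2 + √3]`, and `2 - √3 = (2 + √3)⁻¹`. -/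
theorem div_add_div_le_four_of_le_two_add_sqrt_three {x y : ℝ} (hx : 0 < x) (hy : 0 < y)
    (hxy : x ≤ (2 + √3) * y) (hyx : y ≤ (2 + √3) * x) : x / y + y / x ≤ 4 := by
  have h3 : √3 ^ 2 = 3 := Real.sq_sqrt (by norm_num)
  have hs : √3 < 2 := by nlinarith [Real.sqrt_nonneg 3]
  have hyx' : (2 - √3) * y ≤ x := by
    nlinarith [mul_le_mul_of_nonneg_left hyx (sub_nonneg.2 hs.le)]
  rw [div_add_div _ _ hy.ne' hx.ne', div_le_iff₀ (by positivity)]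
  nlinarith [mul_nonneg (sub_nonneg.2 hxy) (sub_nonneg.2 hyx')]

theorem min_zero_le_mul_of_le_four {a b r B : ℝ} (hr₀ : 0 ≤ r) (hr : r ≤ 4)
    (hB : 2 * (a * b) ≤ B) : min 0 (8 * (a * b)) ≤ r * B := by
  rcases le_total 0 (a * b) with hab | hab
  · exact (min_le_left _ _).trans (mul_nonneg hr₀ (by linarith))
  · exact (min_le_right _ _).trans (by nlinarith)

theorem four_mul_abs_le (a b c : ℝ) :
    4 * (|a| * |c| + |b| * |c|) ≤ 3 * (a ^ 2 + b ^ 2 + c ^ 2) := by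
  rw [← sq_abs a, ← sq_abs b, ← sq_abs c]
  nlinarith [sq_nonneg (3 * |a| - 2 * |c|), sq_nonneg (3 * |b| - 2 * |c|), sq_nonneg c]

theorem six_mul_sum_sq_add_min_nonneg (a b c : ℝ) :
    0 ≤ 6 * (a ^ 2 + b ^ 2 + c ^ 2) + min 0 (8 * (a * b)) + min 0 (8 * (a * c))
      + min 0 (8 * (b * c)) := by
  have hmin (x y : ℝ) : -(8 * (|x| * |y|)) ≤ min 0 (8 * (x * y)) :=
    le_min (neg_nonpos.2 (by positivity)) (by rw [← abs_mul]; linarith [neg_abs_le (x * y)])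
  rcases le_or_gt 0 (a * b) with hab | hab
  · rw [min_eq_left (by linarith)]
    nlinarith [hmin a c, hmin b c, four_mul_abs_le a b c]
  rcases le_or_gt 0 (a * c) with hac | hac
  · rw [min_eq_left (by linarith : (0 : ℝ) ≤ 8 * (a * c))]
    nlinarith [hmin a b, hmin b c, four_mul_abs_le a c b]
  rcases le_or_gt 0 (b * c) with hbc | hbc
  · rw [min_eq_left (by linarith : (0 : ℝ) ≤ 8 * (b * c))]
    nlinarith [hmin a b, hmin a c, four_mul_abs_le b c a]
  -- the three products multiply to the square `(abc)²`, so they cannot all be negative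
  · nlinarith [mul_pos_of_neg_of_neg hab hac, sq_nonneg (a * b * c)]

theorem Matrix.quadFormMulHessian_diagonal_inv_eq (l z v : Fin 3 → ℝ) (hl : ∀ i, l i ≠ 0) :
    quadFormMulHessian (diagonal l) (diagonal l⁻¹) z v =
      6 * ((z 0 * v 0) ^ 2 + (z 1 * v 1) ^ 2 + (z 2 * v 2) ^ 2)
      + (l 0 / l 1 + l 1 / l 0) * ((z 0 * v 1 + z 1 * v 0) ^ 2 + 2 * (z 0 * v 0 * (z 1 * v 1)))
      + (l 0 / l 2 + l 2 / l 0) * ((z 0 * v 2 + z 2 * v 0) ^ 2 + 2 * (z 0 * v 0 * (z 2 * v 2)))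
      + (l 1 / l 2 + l 2 / l 1) * ((z 1 * v 2 + z 2 * v 1) ^ 2 + 2 * (z 1 * v 1 * (z 2 * v 2))) := by
  have := hl 0; have := hl 1; have := hl 2
  simp only [quadFormMulHessian, mulVec_diagonal, dotProduct, Fin.sum_univ_three, Pi.inv_apply]
  field_simp
  ring

theorem Matrix.quadFormMulHessian_diagonal_inv_nonneg {l : Fin 3 → ℝ} (hl : ∀ i, 0 < l i)
    (hratio : ∀ i j, l i / l j + l j / l i ≤ 4) (z v : Fin 3 → ℝ) :
    0 ≤ quadFormMulHessian (diagonal l) (diagonal l⁻¹) z v := by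
  have hB (i j : Fin 3) : 2 * (z i * v i * (z j * v j))
      ≤ (z i * v j + z j * v i) ^ 2 + 2 * (z i * v i * (z j * v j)) :=
    le_add_of_nonneg_left (sq_nonneg _)
  have hpair (i j : Fin 3) := min_zero_le_mul_of_le_four
    (add_nonneg (div_pos (hl i) (hl j)).le (div_pos (hl j) (hl i)).le) (hratio i j) (hB i j)
  rw [quadFormMulHessian_diagonal_inv_eq l z v fun i => (hl i).ne']
  linarith [hpair 0 1, hpair 0 2, hpair 1 2,
    six_mul_sum_sq_add_min_nonneg (z 0 * v 0) (z 1 * v 1) (z 2 * v 2)]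

theorem kantorovich_dim3_convex_of_condNumber_le
    (A : Matrix (Fin 3) (Fin 3) ℝ) (hA : A.PosDef)
    (hκ : (⨆ i, hA.1.eigenvalues i) / (⨅ i, hA.1.eigenvalues i) ≤ 2 + Real.sqrt 3) :
    ConvexOn ℝ Set.univ
      (fun x : Fin 3 → ℝ => (x ⬝ᵥ (A *ᵥ x)) * (x ⬝ᵥ (A⁻¹ *ᵥ x))) := by
  have hratio (i j : Fin 3) : hA.1.eigenvalues i / hA.1.eigenvalues j
      + hA.1.eigenvalues j / hA.1.eigenvalues i ≤ 4 :=
    div_add_div_le_four_of_le_two_add_sqrt_three (hA.eigenvalues_pos i) (hA.eigenvalues_pos j)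
      (le_mul_of_iSup_div_iInf_le hA.eigenvalues_pos hκ i j)
      (le_mul_of_iSup_div_iInf_le hA.eigenvalues_pos hκ j i)
  refine convexOn_quadForm_mul (isHermitian_iff_isSymm.mp hA.1)
    (isHermitian_iff_isSymm.mp hA.1.inv) fun z v => ?_
  rw [hA.1.eq_eigenvectorUnitary_mul_diagonal_mul_transpose,
    inv_mul_diagonal_mul_transpose hA.1.transpose_eigenvectorUnitary_mul_self
      fun i => (hA.eigenvalues_pos i).ne',
    quadFormMulHessian_conj]
  exact quadFormMulHessian_diagonal_inv_nonneg hA.eigenvalues_pos hratio _ _
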